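/- arXiv:2508.16802 — 5 statements merged into one kernel-verified Lean document; each statement's English description precedes it below -/
import Mathlib

section
/- Let μ be a Borel probability measure on ℝ with finite first moment, let F(z) := μ((−∞, z]) be its CDF, and let y ∈ ℝ. Then CRPS(F, y) := ∫_ℝ (F(z) − 𝟙{z ≥ y})² dz ≤ ∫_ℝ |x − y| dμ(x). -/
open MeasureTheory

noncomputable section

/-- CRPS is bounded by the mean absolute deviation: for a Borel probability measure `μ`
on `ℝ` with finite first moment, CDF `F(z) = μ((−∞, z])`, and `y ∈ ℝ`,
`CRPS(F, y) = ∫ (F(z) − 𝟙{z ≥ y})² dz ≤ ∫ |x − y| dμ(x)`. -/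
theorem crps_le_mean_abs_deviation (μ : Measure ℝ) [IsProbabilityMeasure μ]
    (hmom : Integrable (fun x => x) μ) (y : ℝ) :
    (∫⁻ z, ENNReal.ofReal
        (((μ (Set.Iic z)).toReal - if y ≤ z then 1 else 0) ^ 2)) ≤
      ∫⁻ x, ENNReal.ofReal |x - y| ∂μ := by
  -- pointwise bound
  have hpt : ∀ z, ENNReal.ofReal
      (((μ (Set.Iic z)).toReal - if y ≤ z then 1 else 0) ^ 2)
      ≤ if y ≤ z then μ (Set.Ioi z) else μ (Set.Iic z) := by
    intro z
    have hfin : μ (Set.Iic z) ≠ ⊤ := measure_ne_top μ _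
    have ha0 : 0 ≤ (μ (Set.Iic z)).toReal := ENNReal.toReal_nonneg
    have ha1 : (μ (Set.Iic z)).toReal ≤ 1 := by
      have := prob_le_one (μ := μ) (s := Set.Iic z)
      exact ENNReal.toReal_le_of_le_ofReal zero_le_one (by simpa using this)
    by_cases hy : y ≤ z
    · simp only [hy, if_true]
      have hsq : ((μ (Set.Iic z)).toReal - 1) ^ 2 ≤ 1 - (μ (Set.Iic z)).toReal := by
        nlinarith
      calc ENNReal.ofReal (((μ (Set.Iic z)).toReal - 1) ^ 2)
          ≤ ENNReal.ofReal (1 - (μ (Set.Iic z)).toReal) := ENNReal.ofReal_le_ofReal hsq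
        _ = 1 - μ (Set.Iic z) := by
            rw [ENNReal.ofReal_sub _ ha0, ENNReal.ofReal_one, ENNReal.ofReal_toReal hfin]
        _ = μ (Set.Ioi z) := by
            rw [← Set.compl_Iic, measure_compl measurableSet_Iic hfin, measure_univ]
    · simp only [hy, if_false]
      have hsq : ((μ (Set.Iic z)).toReal - 0) ^ 2 ≤ (μ (Set.Iic z)).toReal := by
        nlinarith
      calc ENNReal.ofReal (((μ (Set.Iic z)).toReal - 0) ^ 2)
          ≤ ENNReal.ofReal ((μ (Set.Iic z)).toReal) := ENNReal.ofReal_le_ofReal hsq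
        _ = μ (Set.Iic z) := ENNReal.ofReal_toReal hfin
  refine le_trans (lintegral_mono hpt) ?_
  -- split the integral
  have hsplit : (∫⁻ z, if y ≤ z then μ (Set.Ioi z) else μ (Set.Iic z))
      = (∫⁻ z in Set.Ici y, μ (Set.Ioi z)) + ∫⁻ z in Set.Iio y, μ (Set.Iic z) := by
    rw [← lintegral_add_compl (f := fun z => if y ≤ z then μ (Set.Ioi z) else μ (Set.Iic z))
      (A := Set.Ici y) measurableSet_Ici, Set.compl_Ici]
    congr 1
    · refine setLIntegral_congr_fun measurableSet_Ici ?_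
      intro z hz; simp [Set.mem_Ici.mp hz]
    · refine setLIntegral_congr_fun measurableSet_Iio ?_
      intro z hz; simp [not_le.mpr (Set.mem_Iio.mp hz)]
  rw [hsplit]
  -- Tonelli for each piece
  have h1 : (∫⁻ z in Set.Ici y, μ (Set.Ioi z)) = ∫⁻ x, ENNReal.ofReal (x - y) ∂μ := by
    have : ∀ z, μ (Set.Ioi z) = ∫⁻ x, (if z < x then (1:ENNReal) else 0) ∂μ := by
      intro z
      rw [← lintegral_indicator_one measurableSet_Ioi]
      rfl
    simp_rw [this]
    rw [lintegral_lintegral_swap]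
    · congr 1; ext x
      have : (∫⁻ z in Set.Ici y, (if z < x then (1:ENNReal) else 0))
          = ∫⁻ z in Set.Ici y, (Set.Iio x).indicator 1 z := by
        rfl
      rw [this, lintegral_indicator measurableSet_Iio, Measure.restrict_restrict measurableSet_Iio]
      simp [Set.Iio_inter_Ici, Real.volume_Ico]
    · apply Measurable.aemeasurable
      exact Measurable.ite (measurableSet_lt measurable_fst measurable_snd)
        measurable_const measurable_const
  have h2 : (∫⁻ z in Set.Iio y, μ (Set.Iic z)) = ∫⁻ x, ENNReal.ofReal (y - x) ∂μ := by
    have : ∀ z, μ (Set.Iic z) = ∫⁻ x, (if x ≤ z then (1:ENNReal) else 0) ∂μ := by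
      intro z
      rw [← lintegral_indicator_one measurableSet_Iic]
      rfl
    simp_rw [this]
    rw [lintegral_lintegral_swap]
    · congr 1; ext x
      have : (∫⁻ z in Set.Iio y, (if x ≤ z then (1:ENNReal) else 0))
          = ∫⁻ z in Set.Iio y, (Set.Ici x).indicator 1 z := by
        rfl
      rw [this, lintegral_indicator measurableSet_Ici, Measure.restrict_restrict measurableSet_Ici]
      simp [Set.Ici_inter_Iio, Real.volume_Ico]
    · apply Measurable.aemeasurable
      exact Measurable.ite (measurableSet_le measurable_snd measurable_fst)
        measurable_const measurable_const
  rw [h1, h2, ← lintegral_add_left (by fun_prop)]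
  refine le_of_eq (lintegral_congr fun x => ?_)
  rcases le_total x y with h | h
  · rw [abs_of_nonpos (by linarith : x - y ≤ 0),
      ENNReal.ofReal_of_nonpos (show x - y ≤ 0 by linarith)]
    simp [neg_sub]
  · rw [abs_of_nonneg (by linarith : 0 ≤ x - y),
      ENNReal.ofReal_of_nonpos (show y - x ≤ 0 by linarith)]
    simp
end
end

section
/- Let R_f, R_y > 0 and 0 < σ̄. Let m ∈ ℕ, let a_1, …, a_m ≥ 0 with Σ_{i=1}^m a_i = 1, let μ_1, …, μ_m ∈ ℝ with |μ_i| ≤ R_f, and let σ_1, …, σ_m ∈ (0, σ̄]. Let ν := Σ_{i=1}^m a_i N(μ_i, σ_i²) be the Gaussian mixture measure, F its CDF, and let y ∈ ℝ with |y| ≤ R_y. Then CRPS(F, y) := ∫_ℝ (F(z) − 𝟙{z ≥ y})² dz ≤ R_f + R_y + √(2/π)·σ̄. -/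
open MeasureTheory ProbabilityTheory

noncomputable section

open Real Filter Set
open scoped ENNReal NNReal

lemma integral_Ioi_id_mul_exp {b : ℝ} (hb : 0 < b) :
    ∫ x in Set.Ioi (0:ℝ), x * Real.exp (-b * x ^ 2) = (2 * b)⁻¹ := by
  have hderiv : ∀ x ∈ Set.Ici (0:ℝ),
      HasDerivAt (fun x : ℝ => -(2*b)⁻¹ * Real.exp (-b * x^2)) (x * Real.exp (-b * x^2)) x := by
    intro x _
    have h1 : HasDerivAt (fun x : ℝ => -b * x^2) (-b * (2*x)) x := by
      simpa using ((hasDerivAt_pow 2 x).const_mul (-b))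
    have h2 := (h1.exp).const_mul (-(2*b)⁻¹)
    refine h2.congr_deriv ?_
    field_simp
  have hint : IntegrableOn (fun x : ℝ => x * Real.exp (-b * x^2)) (Set.Ioi 0) :=
    (integrable_mul_exp_neg_mul_sq hb).integrableOn
  have htend : Tendsto (fun x : ℝ => -(2*b)⁻¹ * Real.exp (-b * x^2)) atTop (nhds 0) := by
    have : Tendsto (fun x : ℝ => -b * x^2) atTop atBot := by
      apply Tendsto.const_mul_atTop_of_neg (by linarith : -b < 0)
      exact tendsto_pow_atTop (by norm_num)
    simpa using (Real.tendsto_exp_atBot.comp this).const_mul (-(2*b)⁻¹)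
  have := integral_Ioi_of_hasDerivAt_of_tendsto' hderiv hint htend
  simp only [this]
  norm_num

lemma gaussian_abs_moment (μ0 : ℝ) {s : ℝ} (hs : 0 < s) :
    ∫⁻ x, ENNReal.ofReal |x - μ0| ∂(gaussianReal μ0 ⟨s^2, sq_nonneg s⟩)
      = ENNReal.ofReal (Real.sqrt (2 / Real.pi) * s) := by
  set v : NNReal := ⟨s^2, sq_nonneg s⟩ with hv_def
  have hv : v ≠ 0 := by
    intro h
    have : s^2 = 0 := congrArg Subtype.val h
    exact hs.ne' (by nlinarith)
  have hvpos : (0:ℝ) < (v:ℝ) := by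
    have : (v:ℝ) = s^2 := rfl
    nlinarith
  set b : ℝ := (2 * (v:ℝ))⁻¹ with hb_def
  have hb : 0 < b := by positivity
  have hmeas : Measurable fun x : ℝ => ENNReal.ofReal |x - μ0| :=
    ENNReal.measurable_ofReal.comp ((measurable_id.sub_const μ0).abs)
  rw [gaussianReal_of_var_ne_zero _ hv,
    lintegral_withDensity_eq_lintegral_mul _ (measurable_gaussianPDF _ _) hmeas]
  have hpt : ∀ x : ℝ, (gaussianPDF μ0 v * fun x => ENNReal.ofReal |x - μ0|) x
      = ENNReal.ofReal (gaussianPDFReal μ0 v x * |x - μ0|) := by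
    intro x
    simp only [Pi.mul_apply, gaussianPDF]
    rw [← ENNReal.ofReal_mul (gaussianPDFReal_nonneg _ _ _)]
  simp_rw [hpt]
  -- integrability
  have hfun : ∀ x : ℝ, gaussianPDFReal μ0 v x * |x - μ0|
      = (√(2 * π * v))⁻¹ * |(x - μ0) * Real.exp (-b * (x - μ0)^2)| := by
    intro x
    rw [gaussianPDFReal, abs_mul, abs_of_nonneg (Real.exp_pos _).le]
    have : -(x - μ0)^2 / (2 * (v:ℝ)) = -b * (x - μ0)^2 := by
      rw [hb_def]; field_simp
    rw [this]; ring
  have hint : Integrable (fun x => gaussianPDFReal μ0 v x * |x - μ0|) := by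
    have h1 : Integrable (fun t : ℝ => |t * Real.exp (-b * t^2)|) :=
      (integrable_mul_exp_neg_mul_sq hb).abs
    have h2 := (h1.comp_sub_right μ0).const_mul (√(2 * π * v))⁻¹
    refine h2.congr ?_
    filter_upwards with x
    rw [hfun x]
  rw [← ofReal_integral_eq_lintegral_ofReal hint
    (ae_of_all _ fun x => mul_nonneg (gaussianPDFReal_nonneg _ _ _) (abs_nonneg _))]
  congr 1
  calc ∫ x, gaussianPDFReal μ0 v x * |x - μ0|
      = ∫ x, (√(2 * π * v))⁻¹ * ((fun t => |t * Real.exp (-b * t^2)|) (x - μ0)) := by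
        exact integral_congr_ae (ae_of_all _ fun x => hfun x)
    _ = (√(2 * π * v))⁻¹ * ∫ x, |x * Real.exp (-b * x^2)| := by
        rw [integral_const_mul, integral_sub_right_eq_self (fun t => |t * Real.exp (-b * t^2)|) μ0]
    _ = (√(2 * π * v))⁻¹ * ∫ x, (fun t => t * Real.exp (-b * t^2)) |x| := by
        congr 1
        refine integral_congr_ae (ae_of_all _ fun x => ?_)
        simp only [abs_mul, abs_of_nonneg (Real.exp_pos _).le, sq_abs]
    _ = (√(2 * π * v))⁻¹ * (2 * ∫ x in Set.Ioi (0:ℝ), x * Real.exp (-b * x^2)) := by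
        rw [integral_comp_abs (f := fun t : ℝ => t * Real.exp (-b * t^2))]
    _ = (√(2 * π * v))⁻¹ * (2 * (2*b)⁻¹) := by rw [integral_Ioi_id_mul_exp hb]
    _ = Real.sqrt (2 / Real.pi) * s := by
        have hvs : ((v:ℝ)) = s^2 := rfl
        have h2b : (2*b)⁻¹ = (v:ℝ) := by rw [hb_def]; field_simp
        rw [h2b, hvs]
        have hsq : √(2 * π * s^2) = √(2*π) * s := by
          rw [Real.sqrt_mul (by positivity), Real.sqrt_sq hs.le]
        rw [hsq]
        have hpi : (0:ℝ) < π := Real.pi_pos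
        have h2π : (0:ℝ) < √(2*π) := Real.sqrt_pos.2 (by positivity)
        have key : Real.sqrt (2/π) * √(2*π) = 2 := by
          rw [← Real.sqrt_mul (by positivity)]
          rw [show 2/π * (2*π) = 2^2 by field_simp]
          rw [Real.sqrt_sq (by norm_num)]
        have hsp : (0:ℝ) < √π := Real.sqrt_pos.2 hpi
        have h2s : √2 * √2 = 2 := Real.mul_self_sqrt (by norm_num)
        have hm : √(2*π) = √2 * √π := Real.sqrt_mul (by norm_num) _
        have hd : √(2/π) = √2 / √π := Real.sqrt_div (by norm_num) _
        rw [hm, hd]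
        field_simp
        linear_combination (-1) * h2s

lemma lint_cdf_Iio (ρ : Measure ℝ) [SFinite ρ] (y : ℝ) :
    ∫⁻ z in Set.Iio y, ρ (Set.Iic z) = ∫⁻ x, ENNReal.ofReal (y - x) ∂ρ := by
  have hS : MeasurableSet {p : ℝ × ℝ | p.2 ≤ p.1} := measurableSet_le measurable_snd measurable_fst
  have key : ∀ z : ℝ, ρ (Set.Iic z)
      = ∫⁻ x, Set.indicator {p : ℝ × ℝ | p.2 ≤ p.1} (fun _ => 1) (z, x) ∂ρ := by
    intro z
    rw [← lintegral_indicator_one measurableSet_Iic]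
    refine lintegral_congr fun x => ?_
    simp [Set.indicator_apply, Set.mem_Iic]
  simp_rw [key]
  rw [lintegral_lintegral_swap]
  · refine lintegral_congr fun x => ?_
    have : ∀ z : ℝ, Set.indicator {p : ℝ × ℝ | p.2 ≤ p.1} (fun _ => 1) (z, x)
        = Set.indicator (Set.Ici x) (fun _ => (1:ℝ≥0∞)) z := by
      intro z; simp [Set.indicator_apply, Set.mem_Ici]
    simp_rw [this]
    rw [lintegral_indicator measurableSet_Ici, setLIntegral_one,
      Measure.restrict_apply measurableSet_Ici, Set.Ici_inter_Iio, Real.volume_Ico]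
  · exact (measurable_one.indicator hS).aemeasurable

lemma lint_cdf_Ici (ρ : Measure ℝ) [SFinite ρ] (y : ℝ) :
    ∫⁻ z in Set.Ici y, ρ (Set.Ioi z) = ∫⁻ x, ENNReal.ofReal (x - y) ∂ρ := by
  have hS : MeasurableSet {p : ℝ × ℝ | p.1 < p.2} := measurableSet_lt measurable_fst measurable_snd
  have key : ∀ z : ℝ, ρ (Set.Ioi z)
      = ∫⁻ x, Set.indicator {p : ℝ × ℝ | p.1 < p.2} (fun _ => 1) (z, x) ∂ρ := by
    intro z
    rw [← lintegral_indicator_one measurableSet_Ioi]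
    refine lintegral_congr fun x => ?_
    simp [Set.indicator_apply, Set.mem_Ioi]
  simp_rw [key]
  rw [lintegral_lintegral_swap]
  · refine lintegral_congr fun x => ?_
    have : ∀ z : ℝ, Set.indicator {p : ℝ × ℝ | p.1 < p.2} (fun _ => 1) (z, x)
        = Set.indicator (Set.Iio x) (fun _ => (1:ℝ≥0∞)) z := by
      intro z; simp [Set.indicator_apply, Set.mem_Iio]
    simp_rw [this]
    rw [lintegral_indicator measurableSet_Iio, setLIntegral_one,
      Measure.restrict_apply measurableSet_Iio, Set.inter_comm, Set.Ici_inter_Iio,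
      Real.volume_Ico]
  · exact (measurable_one.indicator hS).aemeasurable

/-- Boundedness of CRPS for a Gaussian mixture: if `ν = ∑ᵢ aᵢ N(μᵢ, σᵢ²)` with
`aᵢ ≥ 0`, `∑ᵢ aᵢ = 1`, `|μᵢ| ≤ R_f`, `σᵢ ∈ (0, σ̄]`, and `F` is the CDF of `ν`, then for
every observation `y` with `|y| ≤ R_y`,
`CRPS(F, y) = ∫ (F(z) − 𝟙{z ≥ y})² dz ≤ R_f + R_y + √(2/π)·σ̄`. -/
theorem gaussian_mixture_crps_bound (Rf Ry σbar : ℝ)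
    (hRf : 0 < Rf) (hRy : 0 < Ry) (hσbar : 0 < σbar)
    (m : ℕ) (a μ σ : Fin m → ℝ)
    (ha0 : ∀ i, 0 ≤ a i) (ha1 : ∑ i, a i = 1)
    (hμ : ∀ i, |μ i| ≤ Rf)
    (hσ : ∀ i, σ i ∈ Set.Ioc (0 : ℝ) σbar)
    (y : ℝ) (hy : |y| ≤ Ry) :
    (∫⁻ z, ENNReal.ofReal
        ((((∑ i, ENNReal.ofReal (a i) •
              gaussianReal (μ i) ⟨(σ i) ^ 2, sq_nonneg (σ i)⟩ :
            Measure ℝ) (Set.Iic z)).toReal - if y ≤ z then 1 else 0) ^ 2)) ≤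
      ENNReal.ofReal (Rf + Ry + Real.sqrt (2 / Real.pi) * σbar) := by
  set νi : Fin m → Measure ℝ :=
    fun i => gaussianReal (μ i) ⟨(σ i) ^ 2, sq_nonneg (σ i)⟩ with hνi_def
  set νm : Measure ℝ := ∑ i, ENNReal.ofReal (a i) • νi i with hνm_def
  set T : ℝ := Rf + Ry + Real.sqrt (2 / Real.pi) * σbar with hT_def
  have hT0 : 0 ≤ T := by
    have := Real.sqrt_nonneg (2 / Real.pi)
    have : 0 ≤ Real.sqrt (2 / Real.pi) * σbar := by positivity
    simp only [hT_def]; linarith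
  have hsum1 : ∑ i, ENNReal.ofReal (a i) = 1 := by
    rw [← ENNReal.ofReal_sum_of_nonneg (fun i _ => ha0 i), ha1, ENNReal.ofReal_one]
  haveI hprob : IsProbabilityMeasure νm := by
    constructor
    rw [hνm_def, Measure.finset_sum_apply]
    simp only [Measure.smul_apply, measure_univ, smul_eq_mul, mul_one]
    simp only [fun x => @measure_univ _ _ (νi x) (instIsProbabilityMeasureGaussianReal _ _), mul_one]
    exact hsum1
  set F : ℝ → ℝ := fun z => (νm (Set.Iic z)).toReal with hF_def
  have hFne : ∀ z, νm (Set.Iic z) ≠ ⊤ := fun z => measure_ne_top _ _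
  have hF0 : ∀ z, 0 ≤ F z := fun z => ENNReal.toReal_nonneg
  have hF1 : ∀ z, F z ≤ 1 := by
    intro z
    have h := prob_le_one (μ := νm) (s := Set.Iic z)
    have := ENNReal.toReal_mono ENNReal.one_ne_top h
    simpa using this
  -- pointwise bound
  have hpt : ∀ z : ℝ, ENNReal.ofReal ((F z - if y ≤ z then 1 else 0) ^ 2)
      ≤ (Set.Iio y).indicator (fun z => νm (Set.Iic z)) z
        + (Set.Ici y).indicator (fun z => νm (Set.Ioi z)) z := by
    intro z
    by_cases hz : y ≤ z
    · rw [if_pos hz, Set.indicator_of_notMem (by simpa using hz),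
        Set.indicator_of_mem (Set.mem_Ici.2 hz), zero_add]
      have hsum : F z + (νm (Set.Ioi z)).toReal = 1 := by
        have h := measure_add_measure_compl (μ := νm) (measurableSet_Iic (a := z))
        rw [Set.compl_Iic] at h
        have h3 := congrArg ENNReal.toReal h
        rw [ENNReal.toReal_add (hFne z) (measure_ne_top _ _)] at h3
        simpa using h3
      have ht0 : 0 ≤ (νm (Set.Ioi z)).toReal := ENNReal.toReal_nonneg
      have hle : (F z - 1) ^ 2 ≤ (νm (Set.Ioi z)).toReal := by nlinarith [hF0 z]
      calc ENNReal.ofReal ((F z - 1) ^ 2) ≤ ENNReal.ofReal ((νm (Set.Ioi z)).toReal) :=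
            ENNReal.ofReal_le_ofReal hle
        _ = νm (Set.Ioi z) := ENNReal.ofReal_toReal (measure_ne_top _ _)
    · rw [if_neg hz, Set.indicator_of_mem (Set.mem_Iio.2 (not_le.mp hz)),
        Set.indicator_of_notMem (by simpa using not_le.mp hz), add_zero, sub_zero]
      have hle : F z ^ 2 ≤ F z := by nlinarith [hF0 z, hF1 z]
      calc ENNReal.ofReal (F z ^ 2) ≤ ENNReal.ofReal (F z) := ENNReal.ofReal_le_ofReal hle
        _ = νm (Set.Iic z) := ENNReal.ofReal_toReal (hFne z)
  have hmono : Measurable fun z => νm (Set.Iic z) := by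
    apply Monotone.measurable
    intro u w huw
    exact measure_mono (Set.Iic_subset_Iic.2 huw)
  have hanti : Measurable fun z => νm (Set.Ioi z) := by
    apply Antitone.measurable
    intro u w huw
    exact measure_mono (Set.Ioi_subset_Ioi huw)
  have hm1 : Measurable ((Set.Iio y).indicator fun z => νm (Set.Iic z)) :=
    hmono.indicator measurableSet_Iio
  have hm2 : Measurable fun x : ℝ => ENNReal.ofReal (y - x) :=
    ENNReal.measurable_ofReal.comp (measurable_const.sub measurable_id)
  -- component bound
  have hcomp : ∀ i, ∫⁻ x, ENNReal.ofReal |x - y| ∂(νi i) ≤ ENNReal.ofReal T := by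
    intro i
    have h1 : ∀ x : ℝ, ENNReal.ofReal |x - y|
        ≤ ENNReal.ofReal |x - μ i| + ENNReal.ofReal (Rf + Ry) := by
      intro x
      rw [← ENNReal.ofReal_add (abs_nonneg _) (by positivity)]
      apply ENNReal.ofReal_le_ofReal
      have h2 : |x - y| ≤ |x - μ i| + |μ i - y| := abs_sub_le x (μ i) y
      have h3 : |μ i - y| ≤ |μ i| + |y| := by
        calc |μ i - y| = |μ i + -y| := by ring_nf
          _ ≤ |μ i| + |-y| := abs_add_le _ _
          _ = |μ i| + |y| := by rw [abs_neg]
      linarith [hμ i, hy]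
    calc ∫⁻ x, ENNReal.ofReal |x - y| ∂(νi i)
        ≤ ∫⁻ x, (ENNReal.ofReal |x - μ i| + ENNReal.ofReal (Rf + Ry)) ∂(νi i) :=
          lintegral_mono h1
      _ = ENNReal.ofReal (Real.sqrt (2 / Real.pi) * σ i) + ENNReal.ofReal (Rf + Ry) := by
          rw [lintegral_add_right _ measurable_const, lintegral_const,
            @measure_univ _ _ (νi i) (instIsProbabilityMeasureGaussianReal _ _), mul_one,
            hνi_def, gaussian_abs_moment _ (hσ i).1]
      _ ≤ ENNReal.ofReal T := by
          rw [← ENNReal.ofReal_add (mul_nonneg (Real.sqrt_nonneg _) (hσ i).1.le) (by positivity)]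
          apply ENNReal.ofReal_le_ofReal
          have h4 : Real.sqrt (2 / Real.pi) * σ i ≤ Real.sqrt (2 / Real.pi) * σbar :=
            mul_le_mul_of_nonneg_left (hσ i).2 (Real.sqrt_nonneg _)
          simp only [hT_def]; linarith
  calc (∫⁻ z, ENNReal.ofReal ((F z - if y ≤ z then 1 else 0) ^ 2))
      ≤ ∫⁻ z, ((Set.Iio y).indicator (fun z => νm (Set.Iic z)) z
          + (Set.Ici y).indicator (fun z => νm (Set.Ioi z)) z) := lintegral_mono hpt
    _ = (∫⁻ z in Set.Iio y, νm (Set.Iic z)) + ∫⁻ z in Set.Ici y, νm (Set.Ioi z) := by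
        rw [lintegral_add_left hm1, lintegral_indicator measurableSet_Iio,
          lintegral_indicator measurableSet_Ici]
    _ = (∫⁻ x, ENNReal.ofReal (y - x) ∂νm) + ∫⁻ x, ENNReal.ofReal (x - y) ∂νm := by
        rw [lint_cdf_Iio, lint_cdf_Ici]
    _ = ∫⁻ x, (ENNReal.ofReal (y - x) + ENNReal.ofReal (x - y)) ∂νm :=
        (lintegral_add_left hm2 _).symm
    _ = ∫⁻ x, ENNReal.ofReal |x - y| ∂νm := by
        refine lintegral_congr fun x => ?_
        rcases le_total x y with h | h
        · rw [ENNReal.ofReal_of_nonpos (show x - y ≤ 0 by linarith), add_zero,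
            abs_of_nonpos (show x - y ≤ 0 by linarith), neg_sub]
        · rw [ENNReal.ofReal_of_nonpos (show y - x ≤ 0 by linarith), zero_add,
            abs_of_nonneg (show 0 ≤ x - y by linarith)]
    _ = ∑ i, ENNReal.ofReal (a i) * ∫⁻ x, ENNReal.ofReal |x - y| ∂(νi i) := by
        rw [hνm_def, lintegral_finset_sum_measure]
        simp_rw [lintegral_smul_measure, smul_eq_mul]
    _ ≤ ∑ i, ENNReal.ofReal (a i) * ENNReal.ofReal T :=
        Finset.sum_le_sum fun i _ => mul_le_mul_right (hcomp i) _
    _ = ENNReal.ofReal T := by rw [← Finset.sum_mul, hsum1, one_mul]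
end
end

section
/- Let 0 < a ≤ b. There exists a constant c₂ > 0 depending only on a and b such that for all σ, s ∈ [a, b] and all Δ ∈ ℝ, log(σ/s) + (s² + Δ²)/(2σ²) − 1/2 ≤ Δ²/(2a²) + c₂ (σ − s)². -/
noncomputable section

/-- Pointwise core of the NLL–L² link: for standard deviations `σ, s` in a band
`[a, b]` with `0 < a ≤ b`, the Gaussian KL divergence
`log(σ/s) + (s² + Δ²)/(2σ²) − 1/2` is bounded by `Δ²/(2a²) + c₂ (σ − s)²` for a
constant `c₂ > 0` depending only on `a` and `b`. -/
theorem kl_pointwise_bound (a b : ℝ) (ha : 0 < a) (hab : a ≤ b) :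
    ∃ c₂ : ℝ, 0 < c₂ ∧
      ∀ σ ∈ Set.Icc a b, ∀ s ∈ Set.Icc a b, ∀ Δ : ℝ,
        Real.log (σ / s) + (s ^ 2 + Δ ^ 2) / (2 * σ ^ 2) - 1 / 2 ≤
          Δ ^ 2 / (2 * a ^ 2) + c₂ * (σ - s) ^ 2 := by
  have hb : 0 < b := ha.trans_le hab
  refine ⟨3 * b / (2 * a ^ 3), by positivity, ?_⟩
  rintro σ ⟨haσ, hσb⟩ s ⟨has, hsb⟩ Δ
  have hσ : 0 < σ := lt_of_lt_of_le ha haσ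
  have hs : 0 < s := lt_of_lt_of_le ha has
  have hlog : Real.log (σ / s) ≤ σ / s - 1 :=
    Real.log_le_sub_one_of_pos (by positivity)
  have h1 : Δ ^ 2 / (2 * σ ^ 2) ≤ Δ ^ 2 / (2 * a ^ 2) :=
    div_le_div_of_nonneg_left (sq_nonneg Δ) (by positivity) (by nlinarith)
  have key : σ / s - 1 + s ^ 2 / (2 * σ ^ 2) - 1 / 2
      = (σ - s) ^ 2 * (2 * σ + s) / (2 * σ ^ 2 * s) := by
    field_simp
    ring
  have h2 : (σ - s) ^ 2 * (2 * σ + s) / (2 * σ ^ 2 * s)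
      ≤ (σ - s) ^ 2 * (3 * b) / (2 * a ^ 3) :=
    div_le_div₀ (by positivity) (by nlinarith [sq_nonneg (σ - s)]) (by positivity)
      (by nlinarith [mul_le_mul (pow_le_pow_left₀ ha.le haσ 2) has ha.le (sq_nonneg σ)])
  have hsplit : (s ^ 2 + Δ ^ 2) / (2 * σ ^ 2)
      = s ^ 2 / (2 * σ ^ 2) + Δ ^ 2 / (2 * σ ^ 2) := by ring
  have : (σ - s) ^ 2 * (3 * b) / (2 * a ^ 3)
      = 3 * b / (2 * a ^ 3) * (σ - s) ^ 2 := by ring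
  linarith [hlog, h1, key ▸ h2, this]
end
end

section
/- Let (X, 𝒜, ν) be a probability space and let 0 < a ≤ b. Let m, f* : X → ℝ and σ, σ* : X → [a, b] be measurable, and suppose that conditionally on X = x the response Y has the Gaussian law N(f*(x), σ*(x)²). Let φ_{μ,s} denote the N(μ, s²) density. Then there exist constants c₁ = 1/(2a²) and c₂ > 0 depending only on a, b such that the excess negative log-likelihood satisfies E[ −log φ_{m(X),σ(X)}(Y) ] − E[ −log φ_{f*(X),σ*(X)}(Y) ] ≤ c₁ ∫_X (m(x) − f*(x))² dν(x) + c₂ ∫_X (σ(x) − σ*(x))² dν(x), where the expectations are over X ~ ν and Y | X = x ~ N(f*(x), σ*(x)²). -/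
open MeasureTheory ProbabilityTheory

noncomputable section

open Real
open scoped NNReal ENNReal

/-- The Gaussian density `φ_{μ,s}(y) = (1/(s√(2π))) exp(−(y−μ)²/(2s²))`. -/
def gaussDensity (μ s y : ℝ) : ℝ :=
  (s * Real.sqrt (2 * Real.pi))⁻¹ * Real.exp (-(y - μ) ^ 2 / (2 * s ^ 2))

namespace NllL2Aux

lemma int_sq_exp {b : ℝ} (hb : 0 < b) :
    ∫ x : ℝ, x ^ 2 * Real.exp (-b * x ^ 2) = Real.sqrt (π / b) * (1 / (2 * b)) := by
  have h1 : ∫ x : ℝ, x ^ 2 * Real.exp (-b * x ^ 2)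
      = 2 * ∫ x in Set.Ioi (0:ℝ), x ^ 2 * Real.exp (-b * x ^ 2) := by
    rw [← integral_comp_abs (f := fun x => x ^ 2 * Real.exp (-b * x ^ 2))]
    congr 1 with x
    rw [sq_abs]
  have h2 := integral_rpow_mul_exp_neg_mul_rpow (p := 2) (q := 2) (b := b)
      (by norm_num) (by norm_num) hb
  simp only [Real.rpow_two] at h2
  norm_num at h2
  simp only [neg_mul] at h1 ⊢
  rw [h1, h2]
  have hΓ : Real.Gamma (3/2) = Real.sqrt π / 2 := by
    have h12 : (3:ℝ)/2 = 1/2 + 1 := by norm_num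
    rw [h12, Real.Gamma_add_one (by norm_num), Real.Gamma_one_half_eq]
    ring
  rw [hΓ]
  have hrw : b ^ (-((3:ℝ)/2)) = (Real.sqrt b * b)⁻¹ := by
    rw [show ((3:ℝ)/2) = 1/2 + 1 by norm_num, Real.rpow_neg hb.le, Real.rpow_add hb,
      Real.rpow_one, ← Real.sqrt_eq_rpow]
  have hsq : Real.sqrt (π / b) = Real.sqrt π / Real.sqrt b :=
    Real.sqrt_div pi_pos.le b
  have hbs : (0:ℝ) < Real.sqrt b := Real.sqrt_pos.mpr hb
  rw [hrw, hsq]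
  field_simp

lemma int_odd_exp (b : ℝ) : ∫ x : ℝ, x * Real.exp (-b * x ^ 2) = 0 := by
  have h := integral_neg_eq_self (fun x : ℝ => x * Real.exp (-b * x ^ 2)) volume
  simp only [neg_sq, neg_mul] at h
  have h2 : ∫ x : ℝ, -(x * Real.exp (-(b * x ^ 2))) = - ∫ x : ℝ, x * Real.exp (-(b * x ^ 2)) :=
    integral_neg _
  rw [h2] at h
  simp only [neg_mul]
  linarith

lemma integrable_sq_exp {b : ℝ} (hb : 0 < b) :
    Integrable (fun x : ℝ => x ^ 2 * Real.exp (-b * x ^ 2)) := by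
  have := integrable_rpow_mul_exp_neg_mul_sq hb (s := 2) (by norm_num)
  simpa [Real.rpow_two] using this

lemma shifted_integrable {b : ℝ} (hb : 0 < b) (C d : ℝ) :
    Integrable (fun z : ℝ => C * Real.exp (-b * z ^ 2) * (z + d) ^ 2) := by
  have hfun : (fun z : ℝ => C * Real.exp (-b * z ^ 2) * (z + d) ^ 2)
      = fun z => C * (z ^ 2 * Real.exp (-b * z ^ 2))
        + (2 * d * C * (z * Real.exp (-b * z ^ 2))
        + d ^ 2 * C * Real.exp (-b * z ^ 2)) := by
    funext z; ring
  rw [hfun]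
  exact ((integrable_sq_exp hb).const_mul C).add
    (((integrable_mul_exp_neg_mul_sq hb).const_mul _).add
      ((integrable_exp_neg_mul_sq hb).const_mul _))

lemma shifted_integral {b : ℝ} (hb : 0 < b) (C d : ℝ) :
    ∫ z : ℝ, C * Real.exp (-b * z ^ 2) * (z + d) ^ 2
      = C * Real.sqrt (π / b) * (1 / (2 * b) + d ^ 2) := by
  have i1 : Integrable (fun z : ℝ => C * (z ^ 2 * Real.exp (-b * z ^ 2))) :=
    (integrable_sq_exp hb).const_mul C
  have i2 : Integrable (fun z : ℝ => 2 * d * C * (z * Real.exp (-b * z ^ 2))) :=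
    (integrable_mul_exp_neg_mul_sq hb).const_mul _
  have i3 : Integrable (fun z : ℝ => d ^ 2 * C * Real.exp (-b * z ^ 2)) :=
    (integrable_exp_neg_mul_sq hb).const_mul _
  have hfun : (fun z : ℝ => C * Real.exp (-b * z ^ 2) * (z + d) ^ 2)
      = fun z => C * (z ^ 2 * Real.exp (-b * z ^ 2))
        + (2 * d * C * (z * Real.exp (-b * z ^ 2))
        + d ^ 2 * C * Real.exp (-b * z ^ 2)) := by
    funext z; ring
  have i23 : Integrable (fun z : ℝ => 2 * d * C * (z * Real.exp (-b * z ^ 2))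
      + d ^ 2 * C * Real.exp (-b * z ^ 2)) := i2.add i3
  rw [hfun, integral_add i1 i23, integral_add i2 i3,
    integral_const_mul, integral_const_mul, integral_const_mul,
    int_sq_exp hb, int_odd_exp b, integral_gaussian]
  ring

lemma toNNReal_sq_ne_zero {s : ℝ} (hs : 0 < s) : Real.toNNReal (s ^ 2) ≠ 0 := by
  simp only [ne_eq, Real.toNNReal_eq_zero, not_le]
  positivity

lemma gauss_integral_eq (f s : ℝ) (hs : 0 < s) (g : ℝ → ℝ) :
    ∫ y, g y ∂(gaussianReal f (Real.toNNReal (s ^ 2)))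
      = ∫ y, gaussianPDFReal f (Real.toNNReal (s ^ 2)) y * g y := by
  set v := Real.toNNReal (s ^ 2) with hv
  rw [gaussianReal_of_var_ne_zero f (toNNReal_sq_ne_zero hs)]
  have hrw : volume.withDensity (gaussianPDF f v)
      = volume.withDensity (fun x => (((gaussianPDFReal f v x).toNNReal : ℝ≥0) : ℝ≥0∞)) := rfl
  rw [hrw, integral_withDensity_eq_integral_smul
    ((measurable_gaussianPDFReal f v).real_toNNReal) g]
  congr 1 with y
  rw [NNReal.smul_def, Real.coe_toNNReal _ (gaussianPDFReal_nonneg f v y), smul_eq_mul]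

lemma gauss_integrable_iff (f s : ℝ) (hs : 0 < s) (g : ℝ → ℝ) :
    Integrable g (gaussianReal f (Real.toNNReal (s ^ 2)))
      ↔ Integrable (fun y => gaussianPDFReal f (Real.toNNReal (s ^ 2)) y * g y) := by
  set v := Real.toNNReal (s ^ 2) with hv
  rw [gaussianReal_of_var_ne_zero f (toNNReal_sq_ne_zero hs)]
  have hrw : volume.withDensity (gaussianPDF f v)
      = volume.withDensity (fun x => (((gaussianPDFReal f v x).toNNReal : ℝ≥0) : ℝ≥0∞)) := rfl
  rw [hrw, integrable_withDensity_iff_integrable_smul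
    ((measurable_gaussianPDFReal f v).real_toNNReal)]
  have hfun : (fun x => (gaussianPDFReal f v x).toNNReal • g x)
      = fun y => gaussianPDFReal f v y * g y := by
    funext y
    rw [NNReal.smul_def, Real.coe_toNNReal _ (gaussianPDFReal_nonneg f v y), smul_eq_mul]
  rw [hfun]

lemma pdf_eq_comp (f s c : ℝ) (hs : 0 < s) :
    (fun y => gaussianPDFReal f (Real.toNNReal (s ^ 2)) y * (y - c) ^ 2)
      = (fun z => (Real.sqrt (2 * π * s ^ 2))⁻¹ * Real.exp (-(2 * s ^ 2)⁻¹ * z ^ 2)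
          * (z + (f - c)) ^ 2) ∘ (fun y => y - f) := by
  funext y
  have hcoe : ((Real.toNNReal (s ^ 2) : ℝ≥0) : ℝ) = s ^ 2 := Real.coe_toNNReal _ (sq_nonneg s)
  simp only [gaussianPDFReal, hcoe, Function.comp_apply]
  have h2 : y - f + (f - c) = y - c := by ring
  rw [h2]
  congr 2
  have : s ^ 2 > 0 := by positivity
  field_simp

lemma gauss_sq_integrable (f s c : ℝ) (hs : 0 < s) :
    Integrable (fun y => (y - c) ^ 2) (gaussianReal f (Real.toNNReal (s ^ 2))) := by
  rw [gauss_integrable_iff f s hs, pdf_eq_comp f s c hs]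
  exact (shifted_integrable (by positivity) _ _).comp_sub_right f

lemma gauss_moment (f s c : ℝ) (hs : 0 < s) :
    ∫ y, (y - c) ^ 2 ∂(gaussianReal f (Real.toNNReal (s ^ 2))) = s ^ 2 + (f - c) ^ 2 := by
  rw [gauss_integral_eq f s hs, pdf_eq_comp f s c hs]
  have hb : (0:ℝ) < (2 * s ^ 2)⁻¹ := by positivity
  have h1 : ∫ y, ((fun z => (Real.sqrt (2 * π * s ^ 2))⁻¹ * Real.exp (-(2 * s ^ 2)⁻¹ * z ^ 2)
          * (z + (f - c)) ^ 2) ∘ (fun y => y - f)) y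
      = ∫ z, (Real.sqrt (2 * π * s ^ 2))⁻¹ * Real.exp (-(2 * s ^ 2)⁻¹ * z ^ 2)
          * (z + (f - c)) ^ 2 := by
    exact integral_sub_right_eq_self (μ := (volume : Measure ℝ))
      (fun z => (Real.sqrt (2 * π * s ^ 2))⁻¹ * Real.exp (-(2 * s ^ 2)⁻¹ * z ^ 2)
        * (z + (f - c)) ^ 2) f
  rw [h1, shifted_integral hb]
  have hπ : π / (2 * s ^ 2)⁻¹ = 2 * π * s ^ 2 := by field_simp
  rw [hπ]
  have hpos : (0:ℝ) < Real.sqrt (2 * π * s ^ 2) := Real.sqrt_pos.mpr (by positivity)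
  have h2 : 1 / (2 * (2 * s ^ 2)⁻¹) = s ^ 2 := by field_simp
  rw [h2]
  field_simp

lemma neg_log_gaussDensity (m s y : ℝ) (hs : 0 < s) :
    -Real.log (gaussDensity m s y)
      = Real.log (s * Real.sqrt (2 * π)) + (y - m) ^ 2 / (2 * s ^ 2) := by
  have hpos : 0 < s * Real.sqrt (2 * π) := by positivity
  rw [gaussDensity, Real.log_mul (inv_ne_zero hpos.ne') (Real.exp_ne_zero _),
    Real.log_inv, Real.log_exp]
  ring

lemma gauss_nll (m s f t : ℝ) (hs : 0 < s) (ht : 0 < t) :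
    ∫ y, -Real.log (gaussDensity m s y) ∂(gaussianReal f (Real.toNNReal (t ^ 2)))
      = Real.log (s * Real.sqrt (2 * π)) + (t ^ 2 + (f - m) ^ 2) / (2 * s ^ 2) := by
  have h1 : (fun y => -Real.log (gaussDensity m s y))
      = fun y => Real.log (s * Real.sqrt (2 * π)) + (2 * s ^ 2)⁻¹ * (y - m) ^ 2 := by
    funext y; rw [neg_log_gaussDensity m s y hs]; ring
  rw [h1, integral_add (integrable_const _) ((gauss_sq_integrable f t m ht).const_mul _),
    integral_const, integral_const_mul, gauss_moment f t m ht]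
  simp [measure_univ]
  ring

lemma pt_ineq (a b sg sgs u : ℝ) (ha : 0 < a) (hab : a ≤ b)
    (hσ : sg ∈ Set.Icc a b) (hσs : sgs ∈ Set.Icc a b) (hu : 0 ≤ u) :
    (Real.log (sg * Real.sqrt (2 * π)) + (sgs ^ 2 + u) / (2 * sg ^ 2))
      - (Real.log (sgs * Real.sqrt (2 * π)) + 1 / 2)
      ≤ (1 / (2 * a ^ 2)) * u + (3 * b / (2 * a ^ 3)) * (sg - sgs) ^ 2 := by
  obtain ⟨haσ, hσb⟩ := hσ
  obtain ⟨haσs, hσsb⟩ := hσs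
  have hσ0 : 0 < sg := lt_of_lt_of_le ha haσ
  have hσs0 : 0 < sgs := lt_of_lt_of_le ha haσs
  have hlog : Real.log (sg * Real.sqrt (2 * π)) - Real.log (sgs * Real.sqrt (2 * π))
      = Real.log sg - Real.log sgs := by
    rw [Real.log_mul hσ0.ne' (by positivity), Real.log_mul hσs0.ne' (by positivity)]
    ring
  have hlog2 : Real.log sg - Real.log sgs ≤ sg / sgs - 1 := by
    have h := Real.log_le_sub_one_of_pos (show (0:ℝ) < sg / sgs by positivity)
    rwa [Real.log_div hσ0.ne' hσs0.ne'] at h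
  -- the variance part
  have key : (sg / sgs - 1) + sgs ^ 2 / (2 * sg ^ 2) - 1 / 2
      = (sg - sgs) ^ 2 * ((2 * sg + sgs) / (2 * sg ^ 2 * sgs)) := by
    field_simp
    ring
  have hq : (2 * sg + sgs) / (2 * sg ^ 2 * sgs) ≤ 3 * b / (2 * a ^ 3) := by
    rw [div_le_div_iff₀ (by positivity) (by positivity)]
    have hA : 2 * sg + sgs ≤ 3 * b := by linarith
    have hσ2 : a ^ 2 ≤ sg ^ 2 := by nlinarith
    have hB : a ^ 2 * a ≤ sg ^ 2 * sgs := mul_le_mul hσ2 haσs ha.le (sq_nonneg sg)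
    have hb0 : 0 < b := lt_of_lt_of_le ha hab
    nlinarith [mul_le_mul_of_nonneg_right hA (by positivity : (0:ℝ) ≤ 2 * a ^ 3),
      mul_le_mul_of_nonneg_left hB (by positivity : (0:ℝ) ≤ 6 * b)]
  have hvar : (sg / sgs - 1) + sgs ^ 2 / (2 * sg ^ 2) - 1 / 2
      ≤ (3 * b / (2 * a ^ 3)) * (sg - sgs) ^ 2 := by
    rw [key]
    calc (sg - sgs) ^ 2 * ((2 * sg + sgs) / (2 * sg ^ 2 * sgs))
        ≤ (sg - sgs) ^ 2 * (3 * b / (2 * a ^ 3)) :=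
          mul_le_mul_of_nonneg_left hq (sq_nonneg _)
      _ = (3 * b / (2 * a ^ 3)) * (sg - sgs) ^ 2 := by ring
  -- the mean part
  have hmean : u / (2 * sg ^ 2) ≤ (1 / (2 * a ^ 2)) * u := by
    have h1 : u / (2 * sg ^ 2) ≤ u / (2 * a ^ 2) := by
      apply div_le_div_of_nonneg_left hu (by positivity)
      nlinarith
    calc u / (2 * sg ^ 2) ≤ u / (2 * a ^ 2) := h1
      _ = (1 / (2 * a ^ 2)) * u := by ring
  have hsplit : (sgs ^ 2 + u) / (2 * sg ^ 2)
      = sgs ^ 2 / (2 * sg ^ 2) + u / (2 * sg ^ 2) := by ring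
  linarith

end NllL2Aux

open NllL2Aux in
/-- NLL–L² link: if conditionally on `X = x` the response `Y ~ N(f⋆(x), σ⋆(x)²)`, and
the predictive standard deviations `σ, σ⋆` take values in `[a, b]` with `0 < a ≤ b`,
then there is `c₂ > 0` depending only on `a, b` such that, with `c₁ = 1/(2a²)`, the
excess negative log-likelihood of `(m, σ)` over `(f⋆, σ⋆)` is at most
`c₁ ∫ (m − f⋆)² dν + c₂ ∫ (σ − σ⋆)² dν`. -/
theorem nll_l2_link (a b : ℝ) (ha : 0 < a) (hab : a ≤ b) :
    ∃ c₂ : ℝ, 0 < c₂ ∧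
      ∀ (X : Type) (_ : MeasurableSpace X) (ν : Measure X), IsProbabilityMeasure ν →
        ∀ m fstar σ σstar : X → ℝ,
          Measurable m → Measurable fstar → Measurable σ → Measurable σstar →
          (∀ x, σ x ∈ Set.Icc a b) → (∀ x, σstar x ∈ Set.Icc a b) →
          Integrable (fun x => (m x - fstar x) ^ 2) ν →
          Integrable (fun x => (σ x - σstar x) ^ 2) ν →
          ((∫ x, (∫ y, -Real.log (gaussDensity (m x) (σ x) y)
                ∂(gaussianReal (fstar x) (Real.toNNReal ((σstar x) ^ 2)))) ∂ν) -
              ∫ x, (∫ y, -Real.log (gaussDensity (fstar x) (σstar x) y)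
                ∂(gaussianReal (fstar x) (Real.toNNReal ((σstar x) ^ 2)))) ∂ν) ≤
            (1 / (2 * a ^ 2)) * (∫ x, (m x - fstar x) ^ 2 ∂ν) +
              c₂ * ∫ x, (σ x - σstar x) ^ 2 ∂ν := by
  have hb0 : 0 < b := lt_of_lt_of_le ha hab
  refine ⟨3 * b / (2 * a ^ 3), by positivity, ?_⟩
  intro X mX ν hν m fstar σ σstar hm hf hσm hσsm hσI hσsI hint1 hint2
  have hσx : ∀ x, 0 < σ x := fun x => lt_of_lt_of_le ha (hσI x).1
  have hσsx : ∀ x, 0 < σstar x := fun x => lt_of_lt_of_le ha (hσsI x).1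
  -- the two integrand functions over X
  set A : X → ℝ := fun x => Real.log (σ x * Real.sqrt (2 * π))
      + ((σstar x) ^ 2 + (fstar x - m x) ^ 2) / (2 * (σ x) ^ 2) with hA_def
  set B : X → ℝ := fun x => Real.log (σstar x * Real.sqrt (2 * π)) + 1 / 2 with hB_def
  have hA : (∫ x, (∫ y, -Real.log (gaussDensity (m x) (σ x) y)
        ∂(gaussianReal (fstar x) (Real.toNNReal ((σstar x) ^ 2)))) ∂ν) = ∫ x, A x ∂ν := by
    congr 1 with x
    exact gauss_nll (m x) (σ x) (fstar x) (σstar x) (hσx x) (hσsx x)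
  have hB : (∫ x, (∫ y, -Real.log (gaussDensity (fstar x) (σstar x) y)
        ∂(gaussianReal (fstar x) (Real.toNNReal ((σstar x) ^ 2)))) ∂ν) = ∫ x, B x ∂ν := by
    congr 1 with x
    rw [gauss_nll (fstar x) (σstar x) (fstar x) (σstar x) (hσsx x) (hσsx x), hB_def]
    have h0 : (0:ℝ) < (σstar x) ^ 2 := pow_pos (hσsx x) 2
    field_simp
    simp [h0.ne']
  -- integrability over ν
  have hmeas_logσ : Measurable fun x => Real.log (σ x * Real.sqrt (2 * π)) :=
    (hσm.mul measurable_const).log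
  have hmeas_logσs : Measurable fun x => Real.log (σstar x * Real.sqrt (2 * π)) :=
    (hσsm.mul measurable_const).log
  have hlogbound : ∀ (σ' : X → ℝ), (∀ x, σ' x ∈ Set.Icc a b) →
      ∀ x, |Real.log (σ' x * Real.sqrt (2 * π))|
        ≤ |Real.log (a * Real.sqrt (2 * π))| + |Real.log (b * Real.sqrt (2 * π))| := by
    intro σ' hI x
    have h0 : 0 < σ' x := lt_of_lt_of_le ha (hI x).1
    have h1 : Real.log (a * Real.sqrt (2 * π)) ≤ Real.log (σ' x * Real.sqrt (2 * π)) :=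
      Real.log_le_log (by positivity)
        (mul_le_mul_of_nonneg_right (hI x).1 (Real.sqrt_nonneg _))
    have h2 : Real.log (σ' x * Real.sqrt (2 * π)) ≤ Real.log (b * Real.sqrt (2 * π)) :=
      Real.log_le_log (by positivity)
        (mul_le_mul_of_nonneg_right (hI x).2 (Real.sqrt_nonneg _))
    rw [abs_le]
    constructor
    · have := neg_abs_le (Real.log (a * Real.sqrt (2 * π)))
      have h3 := abs_nonneg (Real.log (b * Real.sqrt (2 * π)))
      linarith
    · have := le_abs_self (Real.log (b * Real.sqrt (2 * π)))
      have h3 := abs_nonneg (Real.log (a * Real.sqrt (2 * π)))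
      linarith
  have hBint : Integrable B ν := by
    refine Integrable.mono' (integrable_const
      (|Real.log (a * Real.sqrt (2 * π))| + |Real.log (b * Real.sqrt (2 * π))| + 1/2))
      ((hmeas_logσs.add_const _).aestronglyMeasurable) (Filter.Eventually.of_forall fun x => ?_)
    have := hlogbound σstar hσsI x
    rw [hB_def]
    simp only [Real.norm_eq_abs]
    have habs := abs_add_le (Real.log (σstar x * Real.sqrt (2 * π))) (1/2 : ℝ)
    rw [abs_of_nonneg (by norm_num : (0:ℝ) ≤ (1:ℝ)/2)] at habs
    linarith
  have hAint : Integrable A ν := by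
    have hA1 : Integrable (fun x => Real.log (σ x * Real.sqrt (2 * π))
        + (σstar x) ^ 2 / (2 * (σ x) ^ 2)) ν := by
      refine Integrable.mono' (integrable_const
        (|Real.log (a * Real.sqrt (2 * π))| + |Real.log (b * Real.sqrt (2 * π))|
          + b ^ 2 / (2 * a ^ 2)))
        ((hmeas_logσ.add ((hσsm.pow_const 2).div
          ((hσm.pow_const 2).const_mul 2))).aestronglyMeasurable)
        (Filter.Eventually.of_forall fun x => ?_)
      have h1 := hlogbound σ hσI x
      have h2 : (0:ℝ) ≤ (σstar x) ^ 2 / (2 * (σ x) ^ 2) := by positivity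
      have h3 : (σstar x) ^ 2 / (2 * (σ x) ^ 2) ≤ b ^ 2 / (2 * a ^ 2) := by
        apply div_le_div₀ (by positivity) (by nlinarith [(hσsI x).2, hσsx x]) (by positivity)
        nlinarith [(hσI x).1, hσx x]
      simp only [Real.norm_eq_abs]
      have habs := abs_add_le (Real.log (σ x * Real.sqrt (2 * π)))
        ((σstar x) ^ 2 / (2 * (σ x) ^ 2))
      rw [abs_of_nonneg h2] at habs
      linarith
    have hA2 : Integrable (fun x => (fstar x - m x) ^ 2 / (2 * (σ x) ^ 2)) ν := by
      refine Integrable.mono' (hint1.const_mul (1 / (2 * a ^ 2)))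
        (((hf.sub hm).pow_const 2).div
          ((hσm.pow_const 2).const_mul 2)).aestronglyMeasurable
        (Filter.Eventually.of_forall fun x => ?_)
      have h2 : (0:ℝ) ≤ (fstar x - m x) ^ 2 / (2 * (σ x) ^ 2) := by positivity
      have h3 : (fstar x - m x) ^ 2 / (2 * (σ x) ^ 2)
          ≤ (1 / (2 * a ^ 2)) * (m x - fstar x) ^ 2 := by
        have he : (fstar x - m x) ^ 2 = (m x - fstar x) ^ 2 := by ring
        rw [he]
        calc (m x - fstar x) ^ 2 / (2 * (σ x) ^ 2)
            ≤ (m x - fstar x) ^ 2 / (2 * a ^ 2) := by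
              apply div_le_div_of_nonneg_left (sq_nonneg _) (by positivity)
              nlinarith [(hσI x).1, hσx x]
          _ = (1 / (2 * a ^ 2)) * (m x - fstar x) ^ 2 := by ring
      simp only [Real.norm_eq_abs]
      rw [abs_of_nonneg h2]
      exact h3
    have : A = fun x => (Real.log (σ x * Real.sqrt (2 * π))
        + (σstar x) ^ 2 / (2 * (σ x) ^ 2)) + (fstar x - m x) ^ 2 / (2 * (σ x) ^ 2) := by
      funext x
      rw [hA_def]
      ring
    rw [this]
    exact hA1.add hA2
  -- conclude
  rw [hA, hB, ← integral_sub hAint hBint]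
  have hRHSint : Integrable (fun x => (1 / (2 * a ^ 2)) * (m x - fstar x) ^ 2
      + (3 * b / (2 * a ^ 3)) * (σ x - σstar x) ^ 2) ν :=
    (hint1.const_mul _).add (hint2.const_mul _)
  have hmono : ∫ x, (A x - B x) ∂ν ≤ ∫ x, ((1 / (2 * a ^ 2)) * (m x - fstar x) ^ 2
      + (3 * b / (2 * a ^ 3)) * (σ x - σstar x) ^ 2) ∂ν := by
    refine integral_mono (hAint.sub hBint) hRHSint fun x => ?_
    have hpt := pt_ineq a b (σ x) (σstar x) ((fstar x - m x) ^ 2) ha hab (hσI x) (hσsI x)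
      (sq_nonneg _)
    have he : (1 / (2 * a ^ 2)) * (fstar x - m x) ^ 2
        = (1 / (2 * a ^ 2)) * (m x - fstar x) ^ 2 := by ring
    rw [he] at hpt
    simpa [hA_def, hB_def] using hpt
  calc ∫ x, (A x - B x) ∂ν
      ≤ ∫ x, ((1 / (2 * a ^ 2)) * (m x - fstar x) ^ 2
        + (3 * b / (2 * a ^ 3)) * (σ x - σstar x) ^ 2) ∂ν := hmono
    _ = (1 / (2 * a ^ 2)) * (∫ x, (m x - fstar x) ^ 2 ∂ν)
        + (3 * b / (2 * a ^ 3)) * ∫ x, (σ x - σstar x) ^ 2 ∂ν := by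
      rw [integral_add (hint1.const_mul _) (hint2.const_mul _),
        integral_const_mul, integral_const_mul]
end
end

section
/- Let d₀ ∈ ℕ and 0 < a ≤ b. Let U, V ⊆ ℝ^{d₀} be measurable sets and let T : U → V be a bijection satisfying a‖x − x'‖ ≤ ‖T(x) − T(x')‖ ≤ b‖x − x'‖ for all x, x' ∈ U. Then there exist constants c₁, c₂ > 0 depending only on a, b, d₀ such that for every measurable φ : V → ℝ, c₁ ‖φ‖_{L²(V)} ≤ ‖φ ∘ T‖_{L²(U)} ≤ c₂ ‖φ‖_{L²(V)}, where both L² norms are taken with respect to Lebesgue measure on ℝ^{d₀} (the inequality being interpreted in [0, ∞], so that either side is finite iff the other is). -/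
open MeasureTheory
open scoped NNReal ENNReal

noncomputable section

lemma aux_vol_le_hausdorff (d₀ : ℕ) (hd0 : 0 < d₀) :
    (volume : Measure (EuclideanSpace ℝ (Fin d₀))) ≤ μH[(d₀ : ℝ)] := by
  haveI : Nonempty (Fin d₀) := ⟨⟨0, hd0⟩⟩
  rw [Measure.le_iff]
  intro s hs
  set e := (MeasurableEquiv.toLp 2 (Fin d₀ → ℝ)).symm
  have h1 : (volume : Measure (EuclideanSpace ℝ (Fin d₀))) s = volume (⇑e '' s) := by
    rw [MeasurableEquiv.image_eq_preimage_symm]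
    exact ((MeasurePreserving.symm _
      (EuclideanSpace.volume_preserving_symm_measurableEquiv_toLp (Fin d₀))).measure_preimage
      hs.nullMeasurableSet).symm
  have h2 : (volume : Measure (Fin d₀ → ℝ)) (⇑e '' s) = μH[(d₀ : ℝ)] (⇑e '' s) := by
    have := (hausdorffMeasure_pi_real (ι := Fin d₀)).symm
    rw [Fintype.card_fin] at this
    rw [this]
  have h3 : μH[(d₀ : ℝ)] (⇑e '' s) ≤ μH[(d₀ : ℝ)] s := by
    have hl : LipschitzWith 1 (⇑e) := by
      rw [MeasurableEquiv.coe_toLp_symm]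
      exact PiLp.lipschitzWith_ofLp 2 _
    simpa using hl.hausdorffMeasure_image_le (by positivity) s
  calc volume s = μH[(d₀:ℝ)] (⇑e '' s) := h1.trans h2
    _ ≤ μH[(d₀:ℝ)] s := h3

lemma aux_hausdorff_le_vol (d₀ : ℕ) (hd0 : 0 < d₀) :
    (μH[(d₀ : ℝ)] : Measure (EuclideanSpace ℝ (Fin d₀))) ≤
      (((d₀ : ℝ≥0) ^ (1 / (2:ℝ≥0∞)).toReal : ℝ≥0) : ℝ≥0∞) ^ (d₀ : ℝ) • volume := by
  haveI : Nonempty (Fin d₀) := ⟨⟨0, hd0⟩⟩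
  rw [Measure.le_iff]
  intro s hs
  set e := (MeasurableEquiv.toLp 2 (Fin d₀ → ℝ)).symm
  have h1 : (volume : Measure (EuclideanSpace ℝ (Fin d₀))) s = volume (⇑e '' s) := by
    rw [MeasurableEquiv.image_eq_preimage_symm]
    exact ((MeasurePreserving.symm _
      (EuclideanSpace.volume_preserving_symm_measurableEquiv_toLp (Fin d₀))).measure_preimage
      hs.nullMeasurableSet).symm
  have h2 : (volume : Measure (Fin d₀ → ℝ)) (⇑e '' s) = μH[(d₀ : ℝ)] (⇑e '' s) := by
    have := (hausdorffMeasure_pi_real (ι := Fin d₀)).symm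
    rw [Fintype.card_fin] at this
    rw [this]
  have hal : AntilipschitzWith ((d₀ : ℝ≥0) ^ (1 / (2:ℝ≥0∞)).toReal) (⇑e) := by
    rw [MeasurableEquiv.coe_toLp_symm]
    have := PiLp.antilipschitzWith_ofLp 2 (fun _ : Fin d₀ => ℝ)
    rwa [Fintype.card_fin] at this
  have h3 : μH[(d₀ : ℝ)] s ≤
      (((d₀ : ℝ≥0) ^ (1 / (2:ℝ≥0∞)).toReal : ℝ≥0) : ℝ≥0∞) ^ (d₀ : ℝ) * μH[(d₀:ℝ)] (⇑e '' s) := by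
    have := hal.hausdorffMeasure_preimage_le (d := (d₀:ℝ)) (by positivity) (⇑e '' s)
    rwa [Set.preimage_image_eq _ e.injective] at this
  rw [Measure.smul_apply, smul_eq_mul]
  calc μH[(d₀ : ℝ)] s ≤ _ * μH[(d₀:ℝ)] (⇑e '' s) := h3
    _ = _ * volume s := by rw [← h2, ← h1]

/-- L² equivalence under bi-Lipschitz change of variables: if `T : U → V` is a
bijection between measurable subsets of `ℝ^{d₀}` with
`a‖x − x'‖ ≤ ‖T x − T x'‖ ≤ b‖x − x'‖`, then there are constants `c₁, c₂ > 0`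
depending only on `a, b, d₀` such that for every measurable `φ : V → ℝ`,
`c₁ ‖φ‖_{L²(V)} ≤ ‖φ ∘ T‖_{L²(U)} ≤ c₂ ‖φ‖_{L²(V)}`, the norms (values in `[0,∞]`)
being with respect to Lebesgue measure. -/
theorem bilipschitz_L2_equivalence (d₀ : ℕ) (a b : ℝ) (ha : 0 < a) (hab : a ≤ b) :
    ∃ c₁ : ℝ, 0 < c₁ ∧ ∃ c₂ : ℝ, 0 < c₂ ∧
      ∀ U V : Set (EuclideanSpace ℝ (Fin d₀)), MeasurableSet U → MeasurableSet V →
        ∀ T : EuclideanSpace ℝ (Fin d₀) → EuclideanSpace ℝ (Fin d₀),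
          Set.BijOn T U V →
          (∀ x ∈ U, ∀ x' ∈ U,
            a * ‖x - x'‖ ≤ ‖T x - T x'‖ ∧ ‖T x - T x'‖ ≤ b * ‖x - x'‖) →
          ∀ φ : EuclideanSpace ℝ (Fin d₀) → ℝ, Measurable φ →
            ENNReal.ofReal c₁ * eLpNorm φ 2 (volume.restrict V) ≤
                eLpNorm (fun x => φ (T x)) 2 (volume.restrict U) ∧
              eLpNorm (fun x => φ (T x)) 2 (volume.restrict U) ≤
                ENNReal.ofReal c₂ * eLpNorm φ 2 (volume.restrict V) := by
  rcases Nat.eq_zero_or_pos d₀ with hd0 | hd0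
  · -- degenerate case `d₀ = 0`: the space is a subsingleton
    subst hd0
    refine ⟨1, one_pos, 1, one_pos, ?_⟩
    intro U V hU hV T hbij hlip φ hφ
    have hT : T = id := funext fun x => Subsingleton.elim _ _
    have hUV : V = U := by rw [← hbij.image_eq, hT, Set.image_id]
    have hcomp : (fun x => φ (T x)) = φ := by rw [hT]; rfl
    rw [hcomp, hUV, ENNReal.ofReal_one, one_mul]
    exact ⟨le_refl _, le_refl _⟩
  have hb : 0 < b := ha.trans_le hab
  set d : ℝ := (d₀ : ℝ) with hd_def
  have hd : (0:ℝ) ≤ d := Nat.cast_nonneg _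
  set q : ℝ := (1 / (2:ℝ≥0∞)).toReal with hq_def
  have hq : 0 ≤ q := ENNReal.toReal_nonneg
  set KE : ℝ≥0∞ := (((d₀ : ℝ≥0) ^ q : ℝ≥0) : ℝ≥0∞) ^ d with hKE_def
  have hK0 : (0:ℝ≥0) < (d₀ : ℝ≥0) ^ q := NNReal.rpow_pos (by exact_mod_cast hd0)
  have hKE0 : KE ≠ 0 :=
    (ENNReal.rpow_pos (by exact_mod_cast hK0) ENNReal.coe_ne_top).ne'
  have hKEtop : KE ≠ ⊤ := ENNReal.rpow_ne_top_of_nonneg hd ENNReal.coe_ne_top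
  set k₂ : ℝ≥0∞ := ((a⁻¹.toNNReal : ℝ≥0∞)) ^ d * KE with hk₂_def
  have hainv : (0:ℝ≥0∞) < (a⁻¹.toNNReal : ℝ≥0∞) :=
    ENNReal.coe_pos.mpr (Real.toNNReal_pos.mpr (inv_pos.mpr ha))
  have hk₂0 : k₂ ≠ 0 :=
    mul_ne_zero (ENNReal.rpow_pos hainv ENNReal.coe_ne_top).ne' hKE0
  have hk₂top : k₂ ≠ ⊤ :=
    ENNReal.mul_ne_top (ENNReal.rpow_ne_top_of_nonneg hd ENNReal.coe_ne_top) hKEtop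
  set k₁ : ℝ≥0∞ := ((b.toNNReal : ℝ≥0∞) ^ d * KE)⁻¹ with hk₁_def
  have hbpos : (0:ℝ≥0∞) < (b.toNNReal : ℝ≥0∞) :=
    ENNReal.coe_pos.mpr (Real.toNNReal_pos.mpr hb)
  have hk₁0 : k₁ ≠ 0 :=
    ENNReal.inv_ne_zero.mpr
      (ENNReal.mul_ne_top (ENNReal.rpow_ne_top_of_nonneg hd ENNReal.coe_ne_top) hKEtop)
  have hk₁top : k₁ ≠ ⊤ :=
    ENNReal.inv_ne_top.mpr
      (mul_ne_zero (ENNReal.rpow_pos hbpos ENNReal.coe_ne_top).ne' hKE0)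
  refine ⟨(k₁ ^ q).toReal, ?_, (k₂ ^ q).toReal, ?_, ?_⟩
  · exact ENNReal.toReal_pos (ENNReal.rpow_pos (pos_iff_ne_zero.mpr hk₁0) hk₁top).ne'
      (ENNReal.rpow_ne_top_of_nonneg hq hk₁top)
  · exact ENNReal.toReal_pos (ENNReal.rpow_pos (pos_iff_ne_zero.mpr hk₂0) hk₂top).ne'
      (ENNReal.rpow_ne_top_of_nonneg hq hk₂top)
  intro U V hU hV T hbij hlip φ hφ
  haveI : Nonempty (EuclideanSpace ℝ (Fin d₀)) := ⟨0⟩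
  -- Lipschitz facts for `T` and its inverse on `V`
  have hT_lip : LipschitzOnWith b.toNNReal T U := by
    apply LipschitzOnWith.of_dist_le_mul
    intro x hx y hy
    rw [dist_eq_norm, dist_eq_norm, Real.coe_toNNReal _ hb.le]
    exact (hlip x hx y hy).2
  set S := Function.invFunOn T U with hS_def
  have hS_maps : Set.MapsTo S V U := hbij.surjOn.mapsTo_invFunOn
  have hS_right : Set.RightInvOn S T V := hbij.surjOn.rightInvOn_invFunOn
  have hS_left : Set.LeftInvOn S T U := hbij.injOn.leftInvOn_invFunOn
  have hS_lip : LipschitzOnWith a⁻¹.toNNReal S V := by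
    apply LipschitzOnWith.of_dist_le_mul
    intro y hy y' hy'
    rw [dist_eq_norm, dist_eq_norm, Real.coe_toNNReal _ (inv_pos.mpr ha).le]
    have h1 := (hlip (S y) (hS_maps hy) (S y') (hS_maps hy')).1
    rw [hS_right hy, hS_right hy'] at h1
    have h2 : ‖S y - S y'‖ = a⁻¹ * (a * ‖S y - S y'‖) := by field_simp
    rw [h2]
    exact mul_le_mul_of_nonneg_left h1 (inv_pos.mpr ha).le
  have hT_ae : AEMeasurable T (volume.restrict U) :=
    (hT_lip.continuousOn).aemeasurable hU
  set μm := Measure.map T (volume.restrict U) with hμm_def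
  -- volume vs Hausdorff measure on Euclidean space
  have hv1 : ∀ s : Set (EuclideanSpace ℝ (Fin d₀)), volume s ≤ μH[d] s :=
    Measure.le_iff'.mp (aux_vol_le_hausdorff d₀ hd0)
  have hv2 : ∀ s : Set (EuclideanSpace ℝ (Fin d₀)), μH[d] s ≤ KE * volume s := by
    intro s
    have h := Measure.le_iff'.mp (aux_hausdorff_le_vol d₀ hd0) s
    rw [Measure.smul_apply, smul_eq_mul] at h
    exact h
  -- measure comparison between the pushforward measure and `volume.restrict V`
  have hkey : ∀ A : Set (EuclideanSpace ℝ (Fin d₀)), MeasurableSet A →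
      k₁ * (volume.restrict V) A ≤ μm A ∧ μm A ≤ k₂ * (volume.restrict V) A := by
    intro A hA
    have hmap : μm A = volume (T ⁻¹' A ∩ U) := by
      rw [hμm_def, Measure.map_apply_of_aemeasurable hT_ae hA, Measure.restrict_apply' hU]
    have hres : (volume.restrict V) A = volume (A ∩ V) := Measure.restrict_apply' hV
    set s := T ⁻¹' A ∩ U with hs_def
    set t := A ∩ V with ht_def
    have hst : T '' s = t := by
      apply Set.Subset.antisymm
      · rintro _ ⟨x, ⟨hxA, hxU⟩, rfl⟩
        exact ⟨hxA, hbij.mapsTo hxU⟩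
      · rintro y ⟨hyA, hyV⟩
        obtain ⟨x, hxU, rfl⟩ := hbij.surjOn hyV
        exact ⟨x, ⟨hyA, hxU⟩, rfl⟩
    have hts : S '' t = s := by
      apply Set.Subset.antisymm
      · rintro _ ⟨y, ⟨hyA, hyV⟩, rfl⟩
        refine ⟨?_, hS_maps hyV⟩
        show T (S y) ∈ A
        rw [hS_right hyV]; exact hyA
      · rintro x ⟨hxA, hxU⟩
        exact ⟨T x, ⟨hxA, hbij.mapsTo hxU⟩, hS_left hxU⟩
    have hH1 : μH[d] t ≤ (b.toNNReal : ℝ≥0∞) ^ d * μH[d] s := by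
      rw [← hst]
      exact (hT_lip.mono Set.inter_subset_right).hausdorffMeasure_image_le hd
    have hH2 : μH[d] s ≤ (a⁻¹.toNNReal : ℝ≥0∞) ^ d * μH[d] t := by
      rw [← hts]
      exact (hS_lip.mono Set.inter_subset_right).hausdorffMeasure_image_le hd
    constructor
    · -- lower bound
      have h1 : (volume.restrict V) A ≤ k₁⁻¹ * μm A := by
        rw [hres, hmap, hk₁_def, inv_inv]
        calc volume t ≤ μH[d] t := hv1 t
          _ ≤ (b.toNNReal : ℝ≥0∞) ^ d * μH[d] s := hH1
          _ ≤ (b.toNNReal : ℝ≥0∞) ^ d * (KE * volume s) := by gcongr; exact hv2 s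
          _ = (b.toNNReal : ℝ≥0∞) ^ d * KE * volume s := by ring
      calc k₁ * (volume.restrict V) A ≤ k₁ * (k₁⁻¹ * μm A) := by gcongr
        _ = (k₁ * k₁⁻¹) * μm A := by ring
        _ = μm A := by rw [ENNReal.mul_inv_cancel hk₁0 hk₁top, one_mul]
    · -- upper bound
      rw [hres, hmap]
      calc volume s ≤ μH[d] s := hv1 s
        _ ≤ (a⁻¹.toNNReal : ℝ≥0∞) ^ d * μH[d] t := hH2
        _ ≤ (a⁻¹.toNNReal : ℝ≥0∞) ^ d * (KE * volume t) := by gcongr; exact hv2 t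
        _ = k₂ * volume t := by rw [hk₂_def]; ring
  have hle1 : k₁ • volume.restrict V ≤ μm :=
    Measure.le_iff.mpr fun A hA => by
      rw [Measure.smul_apply, smul_eq_mul]; exact (hkey A hA).1
  have hle2 : μm ≤ k₂ • volume.restrict V :=
    Measure.le_iff.mpr fun A hA => by
      rw [Measure.smul_apply, smul_eq_mul]; exact (hkey A hA).2
  -- transfer to `eLpNorm`
  have heq : eLpNorm φ 2 μm = eLpNorm (fun x => φ (T x)) 2 (volume.restrict U) :=
    eLpNorm_map_measure hφ.aestronglyMeasurable hT_ae
  have hsmul1 :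
      eLpNorm φ 2 (k₁ • volume.restrict V) = k₁ ^ q * eLpNorm φ 2 (volume.restrict V) := by
    rw [eLpNorm_smul_measure_of_ne_top (by norm_num : (2:ℝ≥0∞) ≠ ⊤), hq_def, smul_eq_mul]
  have hsmul2 :
      eLpNorm φ 2 (k₂ • volume.restrict V) = k₂ ^ q * eLpNorm φ 2 (volume.restrict V) := by
    rw [eLpNorm_smul_measure_of_ne_top (by norm_num : (2:ℝ≥0∞) ≠ ⊤), hq_def, smul_eq_mul]
  have hofc₁ : ENNReal.ofReal (k₁ ^ q).toReal = k₁ ^ q :=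
    ENNReal.ofReal_toReal (ENNReal.rpow_ne_top_of_nonneg hq hk₁top)
  have hofc₂ : ENNReal.ofReal (k₂ ^ q).toReal = k₂ ^ q :=
    ENNReal.ofReal_toReal (ENNReal.rpow_ne_top_of_nonneg hq hk₂top)
  constructor
  · rw [hofc₁, ← hsmul1, ← heq]
    exact eLpNorm_mono_measure _ hle1
  · rw [hofc₂, ← hsmul2, ← heq]
    exact eLpNorm_mono_measure _ hle2
end
end
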